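/- There exists an absolute constant C > 0 such that for every ε > 0, if the number of iterations satisfies T ≥ e^{C·√(nL/ε)} (and T ≥ 2), then the Frank–Wolfe algorithm's best iterate satisfies max_{0 ≤ j ≤ T} F(x(t_j)) ≥ (1/4) F(x*) − ε. -/

import Mathlib

/-- The harmonic number `H j = ∑_{k=1}^j 1/k` (with `H 0 = 0`). -/
noncomputable def harmonicNum (j : ℕ) : ℝ := ∑ k ∈ Finset.range j, (1 : ℝ) / (k + 1)

/-- `H_{2,j} = ∑_{k=1}^j 1/k²`. -/
noncomputable def harmonicNum2 (j : ℕ) : ℝ := ∑ k ∈ Finset.range j, (1 : ℝ) / ((k : ℝ) + 1) ^ 2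

/-- The time values `t_j = 1/(1 - ln(1 + H_j/H_T)) - 1` of the Frank–Wolfe algorithm. -/
noncomputable def fwTime (T j : ℕ) : ℝ :=
  1 / (1 - Real.log (1 + harmonicNum j / harmonicNum T)) - 1

/-- The Frank–Wolfe step ratio `e^{-1/(1+t_j) + 1/(1+t_{j+1})}`. -/
noncomputable def fwRatio (T j : ℕ) : ℝ :=
  Real.exp (-(1 / (1 + fwTime T j)) + 1 / (1 + fwTime T (j + 1)))

/-- `√a_{t_j} = e^{t_j/(1+t_j)}`. -/
noncomputable def fwSqa (T j : ℕ) : ℝ := Real.exp (fwTime T j / (1 + fwTime T j))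

/-- `F : [0,1]^n → ℝ` is DR-submodular: for all `x ≤ y` in `[0,1]^n`, coordinates `i` and
`a > 0` with `x + a·e_i, y + a·e_i ∈ [0,1]^n`, one has
`F(x + a·e_i) - F(x) ≥ F(y + a·e_i) - F(y)`. -/
def DRSubmodular {n : ℕ} (F : (Fin n → ℝ) → ℝ) : Prop :=
  ∀ x y : Fin n → ℝ, x ∈ Set.Icc (0 : Fin n → ℝ) 1 → y ∈ Set.Icc (0 : Fin n → ℝ) 1 →
    x ≤ y → ∀ i : Fin n, ∀ a : ℝ, 0 < a →
      x + a • (Pi.single i 1 : Fin n → ℝ) ∈ Set.Icc (0 : Fin n → ℝ) 1 →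
      y + a • (Pi.single i 1 : Fin n → ℝ) ∈ Set.Icc (0 : Fin n → ℝ) 1 →
      F (y + a • (Pi.single i 1 : Fin n → ℝ)) - F y ≤
        F (x + a • (Pi.single i 1 : Fin n → ℝ)) - F x

/-- The continuous linear map `y ↦ ⟨g, y⟩ = ∑ i, g i * y i` on `ℝⁿ`. -/
noncomputable def gradCLM {n : ℕ} (g : Fin n → ℝ) : (Fin n → ℝ) →L[ℝ] ℝ :=
  ∑ i, g i • (ContinuousLinearMap.proj i : (Fin n → ℝ) →L[ℝ] ℝ)

/-- `gradF` is the gradient of `F` on the box `[0,1]^n`: at each point of the box, `F` is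
differentiable within the box with derivative `y ↦ ⟨gradF z, y⟩`. -/
def HasGradientOnBox {n : ℕ} (F : (Fin n → ℝ) → ℝ) (gradF : (Fin n → ℝ) → Fin n → ℝ) : Prop :=
  ∀ z ∈ Set.Icc (0 : Fin n → ℝ) 1, HasFDerivWithinAt F (gradCLM (gradF z)) (Set.Icc 0 1) z

/-!
Along a nonnegative direction a DR-submodular function is concave. Splitting `y - x` into the
nonnegative directions `x ⊔ y - x` and `x - x ⊓ y` gives `⟨∇F(x), y - x⟩ ≥ F(x ⊔ y) - 2 F(x)`, and
if `x ≤ m` coordinatewise, concavity along the ray from `y` through `x ⊔ y` gives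
`F(x ⊔ y) ≥ (1 - m) F(y)`.

Put `s_j = 1 + H_j / H_T`: the Frank–Wolfe step ratio is `s_j / s_{j+1}`, and every coordinate of
`x(t_j)` is at most `1 - 1/s_j`. One step together with `L`-smoothness then propagates
`s_j² F(x(t_j)) ≥ (s_j - 1) F(x*) - (nL/2) ∑_{k<j} (s_{k+1} - s_k)²`
for as long as the iterates stay below `F(x*)/4`. At `j = T` we have `s_T = 2`, and the error term
is at most `nL / H_T² ≤ ε` because `∑ 1/k² ≤ 2` and `H_T ≥ log T ≥ √(nL/ε)`; hence
`F(x(t_T)) ≥ F(x*)/4 - ε`.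
-/

open Set Filter Topology

lemma Convex.mem_of_iterate_combination {E : Type*} [AddCommGroup E] [Module ℝ E] {P : Set E}
    (hP : Convex ℝ P) {x v : ℕ → E} {ρ : ℕ → ℝ} {T : ℕ} (hx0 : x 0 ∈ P)
    (hv : ∀ j < T, v j ∈ P) (hρ0 : ∀ j < T, 0 ≤ ρ j) (hρ1 : ∀ j < T, ρ j ≤ 1)
    (hupd : ∀ j < T, x (j + 1) = ρ j • x j + (1 - ρ j) • v j) : ∀ j ≤ T, x j ∈ P := by
  intro j hj
  induction j with
  | zero => exact hx0
  | succ j ih =>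
    rw [hupd j hj]
    exact hP (ih (by omega)) (hv j hj) (hρ0 j hj) (sub_nonneg.2 (hρ1 j hj)) (add_sub_cancel _ _)

lemma iterate_combination_apply_le {n : ℕ} {x v : ℕ → Fin n → ℝ} {s : ℕ → ℝ} {T : ℕ}
    (hs : ∀ j, 0 < s j) (hs_succ : ∀ j, s j ≤ s (j + 1)) (hs0 : s 0 = 1) (hx0 : x 0 = 0)
    (hv : ∀ j < T, v j ≤ 1)
    (hupd : ∀ j < T, x (j + 1) = (s j / s (j + 1)) • x j + (1 - s j / s (j + 1)) • v j) :
    ∀ j ≤ T, ∀ i, x j i ≤ 1 - 1 / s j := by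
  intro j hj
  induction j with
  | zero => simp [hx0, hs0]
  | succ j ih =>
    intro i
    have hρ0 : 0 ≤ s j / s (j + 1) := (div_pos (hs j) (hs (j + 1))).le
    have hρ1 : s j / s (j + 1) ≤ 1 := (div_le_one (hs (j + 1))).2 (hs_succ j)
    have hcomb : s j / s (j + 1) * (1 - 1 / s j) + (1 - s j / s (j + 1)) = 1 - 1 / s (j + 1) := by
      field_simp [(hs j).ne', (hs (j + 1)).ne']
      ring
    rw [hupd j hj, ← hcomb]
    simp only [Pi.add_apply, Pi.smul_apply, smul_eq_mul]
    gcongr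
    · exact ih (by omega) i
    · exact mul_le_of_le_one_right (sub_nonneg.2 hρ1) (hv j hj i)

lemma sq_mul_add_sub_le_of_step {s s' f f' B K : ℝ} (hs : 0 < s) (hs' : 0 < s')
    (hf : f ≤ B / s)
    (h : f + (1 - s / s') * (B / s - 2 * f) - K * (1 - s / s') ^ 2 ≤ f') :
    s ^ 2 * f + (s' - s) * B - K * (s' - s) ^ 2 ≤ s' ^ 2 * f' := by
  have hexpand : s' ^ 2 * (f + (1 - s / s') * (B / s - 2 * f) - K * (1 - s / s') ^ 2) =
      s ^ 2 * f + (s' - s) * B - K * (s' - s) ^ 2 + (s' - s) ^ 2 * (B / s - f) := by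
    field_simp
    ring
  have hrest : 0 ≤ (s' - s) ^ 2 * (B / s - f) := mul_nonneg (sq_nonneg _) (sub_nonneg.2 hf)
  nlinarith [mul_le_mul_of_nonneg_left h (sq_nonneg s')]

lemma sub_sum_sq_le_sq_mul_of_step {s f : ℕ → ℝ} {B K : ℝ} {T : ℕ} (hs : ∀ j, 0 < s j)
    (hs0 : s 0 = 1) (hf0 : f 0 = 0) (hfB : ∀ j < T, f j ≤ B / s j)
    (hstep : ∀ j < T,
      f j + (1 - s j / s (j + 1)) * (B / s j - 2 * f j) - K * (1 - s j / s (j + 1)) ^ 2 ≤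
        f (j + 1)) :
    ∀ j ≤ T, (s j - 1) * B - K * ∑ k ∈ Finset.range j, (s (k + 1) - s k) ^ 2 ≤ s j ^ 2 * f j := by
  intro j hj
  induction j with
  | zero => simp [hs0, hf0]
  | succ j ih =>
    rw [Finset.sum_range_succ]
    linarith [ih (by omega), sq_mul_add_sub_le_of_step (hs j) (hs (j + 1)) (hfB j hj) (hstep j hj)]

section DRSubmodular

variable {n : ℕ} {F : (Fin n → ℝ) → ℝ} {gradF : (Fin n → ℝ) → Fin n → ℝ}

lemma gradCLM_apply (g u : Fin n → ℝ) : gradCLM g u = g ⬝ᵥ u := by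
  simp [gradCLM, dotProduct]

lemma HasGradientOnBox.hasDerivWithinAt_line (hgrad : HasGradientOnBox F gradF)
    {x u : Fin n → ℝ} {s : Set ℝ} (hs : MapsTo (fun c : ℝ => x + c • u) s (Icc 0 1))
    {c : ℝ} (hc : c ∈ s) :
    HasDerivWithinAt (fun c : ℝ => F (x + c • u)) (gradF (x + c • u) ⬝ᵥ u) s c := by
  have hline : HasDerivWithinAt (fun c : ℝ => x + c • u) u s c := by
    simpa using (((hasDerivAt_id c).smul_const u).const_add x).hasDerivWithinAt
  simpa [Function.comp_def, gradCLM_apply] using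
    (hgrad _ (hs hc)).comp_hasDerivWithinAt c hline hs

lemma add_smul_single_mem_Icc {z : Fin n → ℝ} (hz : z ∈ Icc 0 1) {i : Fin n} {a : ℝ}
    (h0 : 0 ≤ z i + a) (h1 : z i + a ≤ 1) :
    z + a • Pi.single i 1 ∈ Icc (0 : Fin n → ℝ) 1 := by
  constructor <;> intro j <;> rcases eq_or_ne j i with rfl | hj
  · simpa using h0
  · simpa [hj] using hz.1 j
  · simpa using h1
  · simpa [hj] using hz.2 j

/-- Along `e_i`, DR-submodularity compares the right difference quotient at `x` with the left one
at `y`; letting the step go to `0` compares the partial derivatives. -/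
lemma DRSubmodular.gradF_le_of_le_of_lt (hDR : DRSubmodular F) (hgrad : HasGradientOnBox F gradF)
    {x y : Fin n → ℝ} (hx : x ∈ Icc 0 1) (hy : y ∈ Icc 0 1) (hxy : x ≤ y) {i : Fin n}
    (hi : x i < y i) : gradF y i ≤ gradF x i := by
  set e : Fin n → ℝ := Pi.single i 1
  have hx0 : 0 ≤ x i := hx.1 i
  have hy1 : y i ≤ 1 := hy.2 i
  have hright : MapsTo (fun a : ℝ => x + a • e) (Icc 0 (1 - x i)) (Icc 0 1) := fun a ha =>
    add_smul_single_mem_Icc hx (by linarith [ha.1]) (by linarith [ha.2])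
  have hleft : MapsTo (fun a : ℝ => y + a • -e) (Icc 0 (y i - x i)) (Icc 0 1) := fun a ha => by
    simpa [smul_neg, ← neg_smul, ← sub_eq_add_neg] using
      add_smul_single_mem_Icc (a := -a) hy (by linarith [ha.2]) (by linarith [ha.1])
  have hdx : Tendsto (slope (fun a : ℝ => F (x + a • e)) 0) (𝓝[>] 0) (𝓝 (gradF x i)) := by
    have h := hgrad.hasDerivWithinAt_line hright ⟨le_rfl, by linarith⟩
    simp only [zero_smul, add_zero, e, dotProduct_single, mul_one] at h
    exact (hasDerivWithinAt_iff_tendsto_slope' (lt_irrefl 0)).1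
      (h.mono_of_mem_nhdsWithin (Icc_mem_nhdsGT (by linarith)))
  have hdy : Tendsto (slope (fun a : ℝ => F (y + a • -e)) 0) (𝓝[>] 0) (𝓝 (-gradF y i)) := by
    have h := hgrad.hasDerivWithinAt_line hleft ⟨le_rfl, by linarith⟩
    simp only [zero_smul, add_zero, e, dotProduct_neg, dotProduct_single, mul_one] at h
    exact (hasDerivWithinAt_iff_tendsto_slope' (lt_irrefl 0)).1
      (h.mono_of_mem_nhdsWithin (Icc_mem_nhdsGT (by linarith)))
  have hslope : ∀ a ∈ Ioo 0 (min (1 - x i) (y i - x i)),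
      -slope (fun a : ℝ => F (y + a • -e)) 0 a ≤ slope (fun a : ℝ => F (x + a • e)) 0 a := by
    intro a ⟨ha0, ha⟩
    have hback : y + a • -e + a • e = y := by simp
    have hdr := hDR x (y + a • -e) hx (hleft ⟨ha0.le, ha.le.trans (min_le_right _ _)⟩) ?_ i a ha0
      (hright ⟨ha0.le, ha.le.trans (min_le_left _ _)⟩) (by rw [hback]; exact hy)
    · rw [hback] at hdr
      simp only [slope_def_field, zero_smul, add_zero, sub_zero, ← neg_div]
      gcongr
      linarith
    · intro j
      rcases eq_or_ne j i with rfl | hj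
      · simp only [e, Pi.add_apply, Pi.smul_apply, Pi.neg_apply, Pi.single_eq_same, smul_eq_mul]
        linarith [lt_min_iff.1 ha]
      · simpa [e, hj] using hxy j
  simpa using le_of_tendsto_of_tendsto hdy.neg hdx
    (eventually_of_mem (Ioo_mem_nhdsGT (lt_min (by linarith) (by linarith))) hslope)

lemma DRSubmodular.dotProduct_gradF_le (hDR : DRSubmodular F) (hgrad : HasGradientOnBox F gradF)
    {z w u : Fin n → ℝ} (hz : z ∈ Icc 0 1) (hw : w ∈ Icc 0 1) (hzw : z ≤ w) (hu : 0 ≤ u)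
    (hlt : ∀ i, 0 < u i → z i < w i) : gradF w ⬝ᵥ u ≤ gradF z ⬝ᵥ u := by
  refine Finset.sum_le_sum fun i _ => ?_
  rcases (hu i).eq_or_lt with h | h
  · simp [← h]
  · exact mul_le_mul_of_nonneg_right (hDR.gradF_le_of_le_of_lt hgrad hz hw hzw (hlt i h)) (hu i)

lemma mapsTo_line_Icc {x u : Fin n → ℝ} (hx : x ∈ Icc 0 1) (hxu : x + u ∈ Icc 0 1) :
    MapsTo (fun c : ℝ => x + c • u) (Icc 0 1) (Icc 0 1) := fun c hc => by
  simpa using (convex_Icc (0 : Fin n → ℝ) 1).add_smul_sub_mem hx hxu hc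

lemma DRSubmodular.concaveOn_line (hDR : DRSubmodular F) (hgrad : HasGradientOnBox F gradF)
    {x u : Fin n → ℝ} (hx : x ∈ Icc 0 1) (hu : 0 ≤ u) (hxu : x + u ∈ Icc 0 1) :
    ConcaveOn ℝ (Icc 0 1) (fun c : ℝ => F (x + c • u)) := by
  have hmaps := mapsTo_line_Icc hx hxu
  have hderiv : ∀ c ∈ Ioo (0 : ℝ) 1,
      HasDerivAt (fun c : ℝ => F (x + c • u)) (gradF (x + c • u) ⬝ᵥ u) c := fun c hc =>
    (hgrad.hasDerivWithinAt_line hmaps (Ioo_subset_Icc_self hc)).hasDerivAt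
      (Icc_mem_nhds hc.1 hc.2)
  refine AntitoneOn.concaveOn_of_deriv (convex_Icc 0 1)
    (fun c hc => (hgrad.hasDerivWithinAt_line hmaps hc).continuousWithinAt) ?_ ?_
  · rw [interior_Icc]
    exact fun c hc => (hderiv c hc).differentiableAt.differentiableWithinAt
  rw [interior_Icc]
  intro c hc d hd hcd
  rw [(hderiv c hc).deriv, (hderiv d hd).deriv]
  rcases hcd.eq_or_lt with rfl | hcd
  · rfl
  refine hDR.dotProduct_gradF_le hgrad (hmaps (Ioo_subset_Icc_self hc))
    (hmaps (Ioo_subset_Icc_self hd)) ?_ hu fun i hi => ?_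
  · exact add_le_add_right (smul_le_smul_of_nonneg_right hcd.le hu) x
  · simpa using mul_lt_mul_of_pos_right hcd hi

lemma DRSubmodular.sub_le_dotProduct_gradF (hDR : DRSubmodular F)
    (hgrad : HasGradientOnBox F gradF) {x u : Fin n → ℝ} (hx : x ∈ Icc 0 1) (hu : 0 ≤ u)
    (hxu : x + u ∈ Icc 0 1) : F (x + u) - F x ≤ gradF x ⬝ᵥ u := by
  have hmaps := mapsTo_line_Icc hx hxu
  simpa [slope_def_field] using (hDR.concaveOn_line hgrad hx hu hxu).slope_le_of_hasDerivWithinAt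
    (left_mem_Icc.2 zero_le_one) (right_mem_Icc.2 zero_le_one) one_pos
    (hgrad.hasDerivWithinAt_line hmaps (left_mem_Icc.2 zero_le_one))

lemma DRSubmodular.dotProduct_gradF_le_sub (hDR : DRSubmodular F)
    (hgrad : HasGradientOnBox F gradF) {x u : Fin n → ℝ} (hx : x ∈ Icc 0 1) (hu : 0 ≤ u)
    (hxu : x + u ∈ Icc 0 1) : gradF (x + u) ⬝ᵥ u ≤ F (x + u) - F x := by
  have hmaps := mapsTo_line_Icc hx hxu
  simpa [slope_def_field] using (hDR.concaveOn_line hgrad hx hu hxu).le_slope_of_hasDerivWithinAt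
    (left_mem_Icc.2 zero_le_one) (right_mem_Icc.2 zero_le_one) one_pos
    (hgrad.hasDerivWithinAt_line hmaps (right_mem_Icc.2 zero_le_one))

lemma DRSubmodular.one_sub_mul_le_sup (hDR : DRSubmodular F) (hgrad : HasGradientOnBox F gradF)
    (hF0 : ∀ z ∈ Icc (0 : Fin n → ℝ) 1, 0 ≤ F z) {x y : Fin n → ℝ} {m : ℝ}
    (hy : y ∈ Icc 0 1) (hxm : ∀ i, x i ≤ m) (hm0 : 0 ≤ m) (hm1 : m ≤ 1) :
    (1 - m) * F y ≤ F (x ⊔ y) := by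
  rcases hm0.eq_or_lt with rfl | hm
  · rw [sup_eq_right.2 fun i => (hxm i).trans (hy.1 i)]
    simp
  set u : Fin n → ℝ := m⁻¹ • (x ⊔ y - y)
  have hu : 0 ≤ u := smul_nonneg (inv_nonneg.2 hm.le) (sub_nonneg.2 le_sup_right)
  have hyu : y + u ∈ Icc 0 1 := by
    refine ⟨le_add_of_le_of_nonneg hy.1 hu, fun i => ?_⟩
    have hyi0 : 0 ≤ y i := hy.1 i
    have hyi1 : y i ≤ 1 := hy.2 i
    have hgap : max (x i) (y i) - y i ≤ m * (1 - y i) := by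
      rcases le_total (x i) (y i) with h | h
      · simp only [max_eq_right h, sub_self]
        nlinarith
      · simp only [max_eq_left h]
        nlinarith [hxm i]
    have : m⁻¹ * (max (x i) (y i) - y i) ≤ 1 - y i := (inv_mul_le_iff₀ hm).2 hgap
    simp only [u, Pi.add_apply, Pi.smul_apply, Pi.sub_apply, Pi.sup_apply, Pi.one_apply,
      smul_eq_mul]
    linarith
  have hmu : y + m • u = x ⊔ y := by
    simp [u, smul_smul, mul_inv_cancel₀ hm.ne']
  have hconc := (hDR.concaveOn_line hgrad hy hu hyu).2 (left_mem_Icc.2 zero_le_one)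
    (right_mem_Icc.2 zero_le_one) (sub_nonneg.2 hm1) hm0 (sub_add_cancel 1 m)
  simp only [smul_eq_mul, mul_zero, mul_one, zero_add, zero_smul, add_zero, one_smul, hmu] at hconc
  nlinarith [hF0 _ hyu]

lemma DRSubmodular.sup_sub_two_mul_le_dotProduct_gradF (hDR : DRSubmodular F)
    (hgrad : HasGradientOnBox F gradF) (hF0 : ∀ z ∈ Icc (0 : Fin n → ℝ) 1, 0 ≤ F z)
    {x y : Fin n → ℝ} (hx : x ∈ Icc 0 1) (hy : y ∈ Icc 0 1) :
    F (x ⊔ y) - 2 * F x ≤ gradF x ⬝ᵥ (y - x) := by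
  have hsup : x ⊔ y ∈ Icc (0 : Fin n → ℝ) 1 := ⟨hx.1.trans le_sup_left, sup_le hx.2 hy.2⟩
  have hinf : x ⊓ y ∈ Icc (0 : Fin n → ℝ) 1 := ⟨le_inf hx.1 hy.1, inf_le_left.trans hx.2⟩
  have hup := hDR.sub_le_dotProduct_gradF hgrad hx (sub_nonneg.2 le_sup_left)
    (by rwa [add_sub_cancel])
  have hdown := hDR.dotProduct_gradF_le_sub hgrad hinf (sub_nonneg.2 inf_le_left)
    (by rwa [add_sub_cancel])
  rw [add_sub_cancel] at hup hdown
  have hsplit : y - x = (x ⊔ y - x) - (x - x ⊓ y) := by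
    linear_combination -(inf_add_sup x y)
  rw [hsplit, dotProduct_sub]
  linarith [hF0 _ hinf]

lemma DRSubmodular.frankWolfe_step (hDR : DRSubmodular F) (hgrad : HasGradientOnBox F gradF)
    (hF0 : ∀ z ∈ Icc (0 : Fin n → ℝ) 1, 0 ≤ F z) {L : ℝ} (hL : 0 ≤ L)
    (hsmooth : ∀ z ∈ Icc (0 : Fin n → ℝ) 1, ∀ w ∈ Icc (0 : Fin n → ℝ) 1,
      |F w - F z - ∑ i, gradF z i * (w i - z i)| ≤ L / 2 * ∑ i, (w i - z i) ^ 2)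
    {x v xstar : Fin n → ℝ} {m ρ : ℝ} (hx : x ∈ Icc 0 1) (hv : v ∈ Icc 0 1)
    (hxstar : xstar ∈ Icc 0 1) (hxm : ∀ i, x i ≤ m) (hm0 : 0 ≤ m) (hm1 : m ≤ 1)
    (hlmo : gradF x ⬝ᵥ xstar ≤ gradF x ⬝ᵥ v) (hρ0 : 0 ≤ ρ) (hρ1 : ρ ≤ 1) :
    F x + (1 - ρ) * ((1 - m) * F xstar - 2 * F x) - n * L / 2 * (1 - ρ) ^ 2 ≤
      F (ρ • x + (1 - ρ) • v) := by
  set x' := ρ • x + (1 - ρ) • v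
  have hx' : x' ∈ Icc 0 1 := convex_Icc 0 1 hx hv hρ0 (sub_nonneg.2 hρ1) (add_sub_cancel ρ 1)
  have hstep : ∀ i, x' i - x i = (1 - ρ) * (v i - x i) := fun i => by
    simp only [x', Pi.add_apply, Pi.smul_apply, smul_eq_mul]
    ring
  have hlin : ∑ i, gradF x i * (x' i - x i) = (1 - ρ) * gradF x ⬝ᵥ (v - x) := by
    simp only [hstep, dotProduct, Finset.mul_sum, Pi.sub_apply]
    exact Finset.sum_congr rfl fun i _ => by ring
  have hquad : ∑ i, (x' i - x i) ^ 2 ≤ n * (1 - ρ) ^ 2 := by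
    have hcoord : ∀ i, (x' i - x i) ^ 2 ≤ (1 - ρ) ^ 2 := fun i => by
      have hx0 : 0 ≤ x i := hx.1 i
      have hx1 : x i ≤ 1 := hx.2 i
      have hv0 : 0 ≤ v i := hv.1 i
      have hv1 : v i ≤ 1 := hv.2 i
      have : (v i - x i) ^ 2 ≤ 1 := by nlinarith
      rw [hstep, mul_pow]
      nlinarith [sq_nonneg (1 - ρ)]
    simpa using Finset.sum_le_sum fun i (_ : i ∈ Finset.univ) => hcoord i
  have hdir : (1 - m) * F xstar - 2 * F x ≤ gradF x ⬝ᵥ (v - x) := by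
    have hsup := hDR.sup_sub_two_mul_le_dotProduct_gradF hgrad hF0 hx hxstar
    have hunion := hDR.one_sub_mul_le_sup hgrad hF0 hxstar hxm hm0 hm1
    rw [dotProduct_sub] at hsup ⊢
    linarith
  have hsm := (abs_le.1 (hsmooth x hx x' hx')).1
  rw [hlin] at hsm
  nlinarith [mul_le_mul_of_nonneg_left hdir (sub_nonneg.2 hρ1),
    mul_le_mul_of_nonneg_left hquad (by positivity : 0 ≤ L / 2)]

lemma DRSubmodular.frankWolfe_potential (hDR : DRSubmodular F) (hgrad : HasGradientOnBox F gradF)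
    (hF0 : ∀ z ∈ Icc (0 : Fin n → ℝ) 1, 0 ≤ F z) {L : ℝ} (hL : 0 ≤ L)
    (hsmooth : ∀ z ∈ Icc (0 : Fin n → ℝ) 1, ∀ w ∈ Icc (0 : Fin n → ℝ) 1,
      |F w - F z - ∑ i, gradF z i * (w i - z i)| ≤ L / 2 * ∑ i, (w i - z i) ^ 2)
    (hF00 : F 0 = 0) {P : Set (Fin n → ℝ)} (hPbox : P ⊆ Icc 0 1) (hPconv : Convex ℝ P)
    (hP0 : 0 ∈ P) {xstar : Fin n → ℝ} (hxstar : xstar ∈ P) {s : ℕ → ℝ} (hs0 : s 0 = 1)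
    (hs1 : ∀ j, 1 ≤ s j) (hs_succ : ∀ j, s j ≤ s (j + 1)) {T : ℕ} {x v : ℕ → Fin n → ℝ}
    (hx0 : x 0 = 0) (hv : ∀ j < T, v j ∈ P)
    (hlmo : ∀ j < T, ∀ w ∈ P, gradF (x j) ⬝ᵥ w ≤ gradF (x j) ⬝ᵥ v j)
    (hupd : ∀ j < T, x (j + 1) = (s j / s (j + 1)) • x j + (1 - s j / s (j + 1)) • v j)
    (hbelow : ∀ j < T, F (x j) ≤ F xstar / s j) :
    (s T - 1) * F xstar - n * L / 2 * ∑ k ∈ Finset.range T, (s (k + 1) - s k) ^ 2 ≤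
      s T ^ 2 * F (x T) := by
  have hs : ∀ j, 0 < s j := fun j => one_pos.trans_le (hs1 j)
  have hρ0 : ∀ j, 0 ≤ s j / s (j + 1) := fun j => (div_pos (hs j) (hs (j + 1))).le
  have hρ1 : ∀ j, s j / s (j + 1) ≤ 1 := fun j => (div_le_one (hs (j + 1))).2 (hs_succ j)
  have hxP := hPconv.mem_of_iterate_combination (hx0 ▸ hP0) hv (fun j _ => hρ0 j)
    (fun j _ => hρ1 j) hupd
  have hxle := iterate_combination_apply_le hs hs_succ hs0 hx0 (fun j hj => (hPbox (hv j hj)).2)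
    hupd
  refine sub_sum_sq_le_sq_mul_of_step hs hs0 (hx0 ▸ hF00) hbelow (fun j hj => ?_) T le_rfl
  have h := hDR.frankWolfe_step hgrad hF0 hL hsmooth (hPbox (hxP j hj.le)) (hPbox (hv j hj))
    (hPbox hxstar) (hxle j hj.le) (sub_nonneg.2 (div_le_one_of_le₀ (hs1 j) (hs j).le))
    (sub_le_self 1 (one_div_nonneg.2 (hs j).le)) (hlmo j hj xstar hxstar) (hρ0 j) (hρ1 j)
  rwa [sub_sub_cancel, one_div_mul_eq_div, ← hupd j hj] at h

end DRSubmodular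

lemma harmonicNum_eq_harmonic (j : ℕ) : harmonicNum j = harmonic j := by
  simp [harmonicNum, harmonic]

lemma harmonicNum_pos {j : ℕ} (hj : j ≠ 0) : 0 < harmonicNum j := by
  rw [harmonicNum_eq_harmonic]
  exact_mod_cast harmonic_pos hj

lemma harmonicNum_nonneg (j : ℕ) : 0 ≤ harmonicNum j :=
  Finset.sum_nonneg fun _ _ => by positivity

lemma harmonicNum_mono : Monotone harmonicNum := fun _ _ h =>
  Finset.sum_le_sum_of_subset_of_nonneg (Finset.range_subset_range.2 h) fun _ _ _ => by positivity

lemma le_harmonicNum_of_exp_le {c : ℝ} {T : ℕ} (h : Real.exp c ≤ T) : c ≤ harmonicNum T := by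
  have hT : (0 : ℝ) < T := (Real.exp_pos c).trans_le h
  calc c ≤ Real.log T := (Real.le_log_iff_exp_le hT).2 h
    _ ≤ Real.log (T + 1) := Real.log_le_log hT (by linarith)
    _ ≤ harmonicNum T := by
      rw [harmonicNum_eq_harmonic]
      exact_mod_cast log_add_one_le_harmonic T

lemma harmonicNum2_le_two (j : ℕ) : harmonicNum2 j ≤ 2 := by
  have hshift : harmonicNum2 j = ∑ i ∈ Finset.Ioo 0 (j + 1), ((i : ℝ) ^ 2)⁻¹ := by
    rw [harmonicNum2, Finset.range_eq_Ico, ← Finset.Ico_add_one_left_eq_Ioo,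
      ← Finset.sum_Ico_add' (fun i : ℕ => ((i : ℝ) ^ 2)⁻¹) 0 j 1]
    simp [one_div]
  simpa [hshift] using sum_Ioo_inv_sq_le (α := ℝ) 0 (j + 1)

/-- For `j ≤ T` this is the paper's `√a_{t_j} = e^{t_j/(1+t_j)}` (`fwSqa T j`), in closed form. -/
noncomputable def fwScale (T j : ℕ) : ℝ := 1 + harmonicNum j / harmonicNum T

lemma one_le_fwScale (T j : ℕ) : 1 ≤ fwScale T j :=
  le_add_of_nonneg_right (div_nonneg (harmonicNum_nonneg j) (harmonicNum_nonneg T))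

lemma fwScale_pos (T j : ℕ) : 0 < fwScale T j := one_pos.trans_le (one_le_fwScale T j)

lemma fwScale_zero (T : ℕ) : fwScale T 0 = 1 := by simp [fwScale, harmonicNum]

lemma fwScale_self {T : ℕ} (hT : T ≠ 0) : fwScale T T = 2 := by
  rw [fwScale, div_self (harmonicNum_pos hT).ne']
  norm_num

lemma fwScale_le_two {T j : ℕ} (hj : j ≤ T) : fwScale T j ≤ 2 := by
  have h := div_le_one_of_le₀ (harmonicNum_mono hj) (harmonicNum_nonneg T)
  rw [fwScale]
  linarith

lemma fwScale_succ_sub (T j : ℕ) :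
    fwScale T (j + 1) - fwScale T j = 1 / ((j + 1) * harmonicNum T) := by
  rw [fwScale, fwScale, harmonicNum, Finset.sum_range_succ, ← harmonicNum,
    add_sub_add_left_eq_sub, ← sub_div, add_sub_cancel_left, div_div]

lemma fwScale_le_succ (T j : ℕ) : fwScale T j ≤ fwScale T (j + 1) := by
  rw [← sub_nonneg, fwScale_succ_sub]
  exact div_nonneg zero_le_one (mul_nonneg (by positivity) (harmonicNum_nonneg T))

lemma sum_range_sq_fwScale_succ_sub (T j : ℕ) :
    ∑ k ∈ Finset.range j, (fwScale T (k + 1) - fwScale T k) ^ 2 =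
      harmonicNum2 j / harmonicNum T ^ 2 := by
  rw [harmonicNum2, Finset.sum_div]
  exact Finset.sum_congr rfl fun k _ => by
    rw [fwScale_succ_sub, div_pow, one_pow, mul_pow, div_div]

/-- The junk value `1 / 0 = 0` makes this hold even when `log (fwScale T j) = 1`. -/
lemma one_div_one_add_fwTime (T j : ℕ) : 1 / (1 + fwTime T j) = 1 - Real.log (fwScale T j) := by
  rw [fwTime, add_sub_cancel, one_div_one_div, fwScale]

lemma fwRatio_eq_div (T j : ℕ) : fwRatio T j = fwScale T j / fwScale T (j + 1) := by
  rw [fwRatio, one_div_one_add_fwTime, one_div_one_add_fwTime,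
    show ∀ a b : ℝ, -(1 - a) + (1 - b) = a - b from fun a b => by ring, Real.exp_sub,
    Real.exp_log (fwScale_pos T j), Real.exp_log (fwScale_pos T (j + 1))]

lemma mul_sum_sq_fwScale_succ_sub_le {a ε : ℝ} {T : ℕ} (ha : 0 ≤ a) (hε : 0 < ε)
    (hT : Real.exp (√(a / ε)) ≤ T) :
    a / 2 * ∑ k ∈ Finset.range T, (fwScale T (k + 1) - fwScale T k) ^ 2 ≤ ε := by
  have hT0 : T ≠ 0 := by
    rintro rfl
    exact (Real.exp_pos _).not_ge (by simpa using hT)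
  have hH := harmonicNum_pos hT0
  have haH : a ≤ ε * harmonicNum T ^ 2 := by
    have h := pow_le_pow_left₀ (Real.sqrt_nonneg _) (le_harmonicNum_of_exp_le hT) 2
    rw [Real.sq_sqrt (div_nonneg ha hε.le), div_le_iff₀ hε] at h
    linarith
  rw [sum_range_sq_fwScale_succ_sub]
  calc a / 2 * (harmonicNum2 T / harmonicNum T ^ 2) ≤ a / 2 * (2 / harmonicNum T ^ 2) := by
        gcongr
        exact harmonicNum2_le_two T
    _ = a / harmonicNum T ^ 2 := by ring
    _ ≤ ε := by rwa [div_le_iff₀ (by positivity)]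

/-- There is an absolute constant `C > 0` such that for every `ε > 0`, if the
number of iterations satisfies `T ≥ e^{C √(nL/ε)}` (and `T ≥ 2`), then
`max_{0 ≤ j ≤ T} F(x(t_j)) ≥ (1/4) F(x*) - ε`. -/
theorem fw_best_iterate_eps_bound :
    ∃ C : ℝ, 0 < C ∧
      ∀ ε : ℝ, 0 < ε →
      ∀ (n : ℕ) (F : (Fin n → ℝ) → ℝ) (gradF : (Fin n → ℝ) → Fin n → ℝ) (L : ℝ),
        0 ≤ L →
        (∀ z ∈ Set.Icc (0 : Fin n → ℝ) 1, 0 ≤ F z) →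
        DRSubmodular F →
        HasGradientOnBox F gradF →
        (∀ z ∈ Set.Icc (0 : Fin n → ℝ) 1, ∀ w ∈ Set.Icc (0 : Fin n → ℝ) 1,
          |F w - F z - ∑ i, gradF z i * (w i - z i)| ≤ L / 2 * ∑ i, (w i - z i) ^ 2) →
        F 0 = 0 →
        ∀ P : Set (Fin n → ℝ), P ⊆ Set.Icc 0 1 → Convex ℝ P → (0 : Fin n → ℝ) ∈ P →
        ∀ xstar ∈ P, (∀ z ∈ P, F z ≤ F xstar) →
        ∀ T : ℕ, 2 ≤ T → Real.exp (C * Real.sqrt ((n : ℝ) * L / ε)) ≤ (T : ℝ) →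
        ∀ x v : ℕ → Fin n → ℝ,
          x 0 = 0 →
          (∀ j < T, v j ∈ P) →
          (∀ j < T, ∀ w ∈ P, ∑ i, gradF (x j) i * w i ≤ ∑ i, gradF (x j) i * v j i) →
          (∀ j < T, x (j + 1) = fwRatio T j • x j + (1 - fwRatio T j) • v j) →
          ∃ j ≤ T, F (x j) ≥ 1 / 4 * F xstar - ε := by
  refine ⟨1, one_pos, ?_⟩
  intro ε hε n F gradF L hL hF0 hDR hgrad hsmooth hF00 P hPbox hPconv hP0 xstar hxstar _ T hT2 hT
    x v hx0 hv hlmo hupd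
  rw [one_mul] at hT
  by_cases hbig : ∃ j ≤ T, F xstar / 4 ≤ F (x j)
  · obtain ⟨j, hj, h⟩ := hbig
    exact ⟨j, hj, by linarith⟩
  push Not at hbig
  have hbelow : ∀ j < T, F (x j) ≤ F xstar / fwScale T j := fun j hj =>
    (hbig j hj.le).le.trans (div_le_div_of_nonneg_left (hF0 _ (hPbox hxstar)) (fwScale_pos T j)
      (by linarith [fwScale_le_two hj.le]))
  have hpot := hDR.frankWolfe_potential hgrad hF0 hL hsmooth hF00 hPbox hPconv hP0 hxstar
    (fwScale_zero T) (one_le_fwScale T) (fwScale_le_succ T) hx0 hv hlmo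
    (by simpa only [fwRatio_eq_div] using hupd) hbelow
  rw [fwScale_self (by omega)] at hpot
  have herr := mul_sum_sq_fwScale_succ_sub_le (mul_nonneg n.cast_nonneg hL) hε hT
  exact ⟨T, le_rfl, by linarith⟩
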